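/- arXiv:1912.04692 — 2 statements merged into one kernel-verified Lean document; each statement's English description precedes it below -/
import Mathlib

section
/- Let γ > 0. If u, ū ∈ ℝ and A(u,ū) satisfies |A(u,ū)| ≤ K/((1+|u|)^{1+γ}(1+|ū|)^{1+γ}) for all (u,ū), and ψ : ℝ² → ℝ is C² with ∂_u∂_ū ψ = A, with initial data on the line {u = -ū} satisfying |ψ(s,-s)| ≤ ε₀, |∂_uψ(s,-s)| ≤ ε₀/(1+|s|)^{1+γ}, |∂_ūψ(s,-s)| ≤ ε₀/(1+|s|)^{1+γ}, then everywhere: |∂_ūψ(u,ū)| ≤ ε₀/(1+|ū|)^{1+γ} + 2K(1+γ^{-1})/(1+|ū|)^{1+γ}, and |ψ(u,ū)| ≤ ε₀ + 2(1+γ^{-1})(ε₀ + 2K(1+γ^{-1})). -/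
open MeasureTheory Real Set intervalIntegral
open scoped Interval

lemma weight_integrable {γ : ℝ} (hγ : 0 < γ) :
    Integrable (fun s : ℝ => (1 + |s|) ^ (-(1 + γ))) := by
  have h : (1 : ℝ) < 1 + γ := by linarith
  have := integrable_one_add_norm (E := ℝ) (μ := volume) (r := 1 + γ) (by simpa using h)
  simpa [Real.norm_eq_abs] using this

lemma weight_integral_le {γ : ℝ} (hγ : 0 < γ) :
    ∫ s : ℝ, (1 + |s|) ^ (-(1 + γ)) ≤ 2 * (1 + γ⁻¹) := by
  have habs : (∫ s : ℝ, (1 + |s|) ^ (-(1 + γ)))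
      = 2 * ∫ x in Ioi (0:ℝ), (1 + x) ^ (-(1 + γ)) := by
    exact integral_comp_abs (f := fun x => (1 + x) ^ (-(1 + γ)))
  rw [habs]
  have hIoi : IntegrableOn (fun x : ℝ => (1 + x) ^ (-(1 + γ))) (Ioi 0) := by
    refine ((weight_integrable hγ).integrableOn (s := Ioi 0)).congr_fun
      (fun x hx => ?_) measurableSet_Ioi
    beta_reduce
    rw [abs_of_pos (mem_Ioi.mp hx)]
  have hsplit : (∫ x in Ioi (0:ℝ), (1 + x) ^ (-(1 + γ)))
      = (∫ x in Ioc (0:ℝ) 1, (1 + x) ^ (-(1 + γ)))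
        + ∫ x in Ioi (1:ℝ), (1 + x) ^ (-(1 + γ)) := by
    rw [← setIntegral_union]
    · rw [Ioc_union_Ioi_eq_Ioi (by norm_num)]
    · exact Ioc_disjoint_Ioi le_rfl
    · exact measurableSet_Ioi
    · exact hIoi.mono_set Ioc_subset_Ioi_self
    · exact hIoi.mono_set (Ioi_subset_Ioi (by norm_num))
  rw [hsplit]
  have h1 : (∫ x in Ioc (0:ℝ) 1, (1 + x) ^ (-(1 + γ))) ≤ 1 := by
    calc (∫ x in Ioc (0:ℝ) 1, (1 + x) ^ (-(1 + γ)))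
        ≤ ∫ _x in Ioc (0:ℝ) 1, (1:ℝ) := by
          refine setIntegral_mono_on (hIoi.mono_set Ioc_subset_Ioi_self)
            (integrableOn_const (by simp)) measurableSet_Ioc
            (fun x hx => ?_)
          exact Real.rpow_le_one_of_one_le_of_nonpos (by linarith [hx.1.le])
            (by linarith)
      _ = 1 := by simp
  have h2 : (∫ x in Ioi (1:ℝ), (1 + x) ^ (-(1 + γ))) ≤ γ⁻¹ := by
    have hint : IntegrableOn (fun x : ℝ => x ^ (-(1 + γ))) (Ioi 1) :=
      integrableOn_Ioi_rpow_of_lt (by linarith) one_pos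
    calc (∫ x in Ioi (1:ℝ), (1 + x) ^ (-(1 + γ)))
        ≤ ∫ x in Ioi (1:ℝ), x ^ (-(1 + γ)) := by
          refine setIntegral_mono_on (hIoi.mono_set (Ioi_subset_Ioi (by norm_num)))
            hint measurableSet_Ioi (fun x hx => ?_)
          exact Real.rpow_le_rpow_of_nonpos (by linarith [mem_Ioi.mp hx])
            (by linarith [mem_Ioi.mp hx]) (by linarith)
      _ = γ⁻¹ := by
          rw [integral_Ioi_rpow_of_lt (by linarith) one_pos]
          rw [Real.one_rpow]
          field_simp
          rw [show -(1 + γ) + 1 = -γ by ring, div_neg, neg_neg, div_self hγ.ne']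
  linarith

lemma abs_intervalIntegral_le {γ : ℝ} (hγ : 0 < γ) {f : ℝ → ℝ} (hf : Continuous f)
    {c : ℝ} (hc : 0 ≤ c) (hbd : ∀ s, |f s| ≤ c * (1 + |s|) ^ (-(1 + γ))) (a b : ℝ) :
    |∫ s in a..b, f s| ≤ c * (2 * (1 + γ⁻¹)) := by
  have hw : Integrable (fun s : ℝ => c * (1 + |s|) ^ (-(1 + γ))) :=
    (weight_integrable hγ).const_mul c
  have hstep1 : |∫ s in a..b, f s| ≤ ∫ s in Ι a b, ‖f s‖ := by
    simpa using intervalIntegral.norm_integral_le_integral_norm_uIoc (a := a) (b := b) (f := f) (μ := volume)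
  calc |∫ s in a..b, f s| ≤ ∫ s in Ι a b, ‖f s‖ := hstep1
    _ ≤ ∫ s in Ι a b, c * (1 + |s|) ^ (-(1 + γ)) := by
        refine setIntegral_mono_on ?_ (hw.integrableOn) measurableSet_uIoc
          (fun s _ => hbd s)
        exact (intervalIntegrable_iff.mp (hf.norm.intervalIntegrable a b))
    _ ≤ ∫ s : ℝ, c * (1 + |s|) ^ (-(1 + γ)) := by
        refine setIntegral_le_integral hw (Filter.Eventually.of_forall fun s => ?_)
        exact mul_nonneg hc (Real.rpow_nonneg (by positivity) _)
    _ = c * ∫ s : ℝ, (1 + |s|) ^ (-(1 + γ)) := integral_const_mul c _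
    _ ≤ c * (2 * (1 + γ⁻¹)) := by
        exact mul_le_mul_of_nonneg_left (weight_integral_le hγ) hc

/-- Integrating `∂_u∂_ū ψ = A` with `|A| ≤ K (1+|u|)^{-1-γ}(1+|ū|)^{-1-γ}` from
data on the line `{u = -ū}` yields
`|∂_ūψ| ≤ (ε₀ + 2K(1+γ⁻¹))/(1+|ū|)^{1+γ}` and a uniform bound on `ψ`. -/
theorem double_null_integration_bounds (γ K ε₀ : ℝ) (hγ : 0 < γ) (hK : 0 ≤ K)
    (hε₀ : 0 ≤ ε₀) (A : ℝ → ℝ → ℝ) (ψ : ℝ → ℝ → ℝ)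
    (hψ : ContDiff ℝ 2 (Function.uncurry ψ))
    (hA : ∀ u ub, |A u ub| ≤ K / ((1 + |u|) ^ (1 + γ) * (1 + |ub|) ^ (1 + γ)))
    (heq : ∀ u ub, deriv (fun s => deriv (fun w => ψ s w) ub) u = A u ub)
    (hdata : ∀ s, |ψ s (-s)| ≤ ε₀ ∧
      |deriv (fun s' => ψ s' (-s)) s| ≤ ε₀ / (1 + |s|) ^ (1 + γ) ∧
      |deriv (fun w => ψ s w) (-s)| ≤ ε₀ / (1 + |s|) ^ (1 + γ)) :
    ∀ u ub,
      |deriv (fun w => ψ u w) ub| ≤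
        ε₀ / (1 + |ub|) ^ (1 + γ) + 2 * K * (1 + γ⁻¹) / (1 + |ub|) ^ (1 + γ) ∧
      |ψ u ub| ≤ ε₀ + 2 * (1 + γ⁻¹) * (ε₀ + 2 * K * (1 + γ⁻¹)) := by
  set F := Function.uncurry ψ with hFdef
  have hFd : Differentiable ℝ F := hψ.differentiable two_ne_zero
  have hg1 : ContDiff ℝ 1 (fun p : ℝ × ℝ => fderiv ℝ F p (0, 1)) :=
    (hψ.fderiv_right (by norm_num)).clm_apply contDiff_const
  have hder : ∀ u w, HasDerivAt (fun w' => ψ u w') (fderiv ℝ F (u, w) (0, 1)) w := by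
    intro u w
    have h1 : HasDerivAt (fun w' : ℝ => ((u : ℝ), w')) ((0 : ℝ), (1 : ℝ)) w :=
      (hasDerivAt_const w u).prodMk (hasDerivAt_id w)
    have := (hFd (u, w)).hasFDerivAt.comp_hasDerivAt w h1
    exact this
  have hgderiv : ∀ u w, deriv (fun w' => ψ u w') w = fderiv ℝ F (u, w) (0, 1) :=
    fun u w => (hder u w).deriv
  -- Part 1
  have part1 : ∀ u ub, |deriv (fun w => ψ u w) ub| ≤
      ε₀ / (1 + |ub|) ^ (1 + γ) + 2 * K * (1 + γ⁻¹) / (1 + |ub|) ^ (1 + γ) := by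
    intro u ub
    set h : ℝ → ℝ := fun s => deriv (fun w => ψ s w) ub with hhdef
    have hh1 : ContDiff ℝ 1 h := by
      have : h = fun s => fderiv ℝ F (s, ub) (0, 1) := funext fun s => hgderiv s ub
      rw [this]
      exact hg1.comp (contDiff_id.prodMk contDiff_const)
    have hdh : Differentiable ℝ h := hh1.differentiable one_ne_zero
    have hcd : Continuous (deriv h) := hh1.continuous_deriv le_rfl
    have hAeq : (fun s => A s ub) = deriv h := funext fun s => (heq s ub).symm
    have hftc : (∫ s in (-ub)..u, A s ub) = h u - h (-ub) := by
      rw [hAeq]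
      exact intervalIntegral.integral_deriv_eq_sub (fun x _ => hdh x)
        (hcd.intervalIntegrable _ _)
    have hubpos : (0:ℝ) < (1 + |ub|) ^ (1 + γ) := Real.rpow_pos_of_pos (by positivity) _
    set c : ℝ := K / (1 + |ub|) ^ (1 + γ) with hcdef
    have hc : 0 ≤ c := div_nonneg hK hubpos.le
    have hbd : ∀ s, |A s ub| ≤ c * (1 + |s|) ^ (-(1 + γ)) := by
      intro s
      have hs : (0:ℝ) < 1 + |s| := by positivity
      have := hA s ub
      rw [Real.rpow_neg hs.le]
      calc |A s ub| ≤ K / ((1 + |s|) ^ (1 + γ) * (1 + |ub|) ^ (1 + γ)) := this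
        _ = c * ((1 + |s|) ^ (1 + γ))⁻¹ := by
            rw [hcdef, div_mul_eq_div_div_swap, div_eq_mul_inv]
    have hint : |∫ s in (-ub)..u, A s ub| ≤ c * (2 * (1 + γ⁻¹)) :=
      abs_intervalIntegral_le hγ (hAeq ▸ hcd) hc hbd (-ub) u
    have hinit : |h (-ub)| ≤ ε₀ / (1 + |ub|) ^ (1 + γ) := by
      have := (hdata (-ub)).2.2
      simpa [hhdef, abs_neg] using this
    have : h u = h (-ub) + ∫ s in (-ub)..u, A s ub := by rw [hftc]; ring
    calc |deriv (fun w => ψ u w) ub| = |h u| := rfl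
      _ = |h (-ub) + ∫ s in (-ub)..u, A s ub| := by rw [this]
      _ ≤ |h (-ub)| + |∫ s in (-ub)..u, A s ub| := abs_add_le _ _
      _ ≤ ε₀ / (1 + |ub|) ^ (1 + γ) + c * (2 * (1 + γ⁻¹)) := add_le_add hinit hint
      _ = ε₀ / (1 + |ub|) ^ (1 + γ) + 2 * K * (1 + γ⁻¹) / (1 + |ub|) ^ (1 + γ) := by
          rw [hcdef]; ring
  intro u ub
  refine ⟨part1 u ub, ?_⟩
  -- Part 2
  set k : ℝ → ℝ := fun w => ψ u w with hkdef
  have hk2 : ContDiff ℝ 2 k := by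
    have : ContDiff ℝ 2 (fun w : ℝ => F (u, w)) :=
      hψ.comp (contDiff_const.prodMk contDiff_id)
    exact this
  have hdk : Differentiable ℝ k := hk2.differentiable two_ne_zero
  have hcdk : Continuous (deriv k) := hk2.continuous_deriv one_le_two
  set M : ℝ := ε₀ + 2 * K * (1 + γ⁻¹) with hMdef
  have hM : 0 ≤ M := by
    have : (0:ℝ) ≤ 1 + γ⁻¹ := by positivity
    have := mul_nonneg (mul_nonneg (by norm_num : (0:ℝ) ≤ 2) hK) this
    rw [hMdef]; linarith
  have hbd : ∀ w, |deriv k w| ≤ M * (1 + |w|) ^ (-(1 + γ)) := by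
    intro w
    have hp := part1 u w
    have hw : (0:ℝ) < 1 + |w| := by positivity
    rw [Real.rpow_neg hw.le]
    calc |deriv k w| ≤ ε₀ / (1 + |w|) ^ (1 + γ) + 2 * K * (1 + γ⁻¹) / (1 + |w|) ^ (1 + γ) := hp
      _ = M * ((1 + |w|) ^ (1 + γ))⁻¹ := by
          rw [hMdef, ← add_div, div_eq_mul_inv]
  have hftc : (∫ w in (-u)..ub, deriv k w) = k ub - k (-u) :=
    intervalIntegral.integral_deriv_eq_sub (fun x _ => hdk x)
      (hcdk.intervalIntegrable _ _)
  have hint : |∫ w in (-u)..ub, deriv k w| ≤ M * (2 * (1 + γ⁻¹)) :=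
    abs_intervalIntegral_le hγ hcdk hM hbd (-u) ub
  have hinit : |k (-u)| ≤ ε₀ := (hdata u).1
  have hke : k ub = k (-u) + ∫ w in (-u)..ub, deriv k w := by rw [hftc]; ring
  calc |ψ u ub| = |k ub| := rfl
    _ = |k (-u) + ∫ w in (-u)..ub, deriv k w| := by rw [hke]
    _ ≤ |k (-u)| + |∫ w in (-u)..ub, deriv k w| := abs_add_le _ _
    _ ≤ ε₀ + M * (2 * (1 + γ⁻¹)) := add_le_add hinit hint
    _ = ε₀ + 2 * (1 + γ⁻¹) * (ε₀ + 2 * K * (1 + γ⁻¹)) := by rw [hMdef]; ring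
end

section
/- Fix H₀ ∈ ℝ and ζ ∈ C²(ℝ) with |ζ'(s)|, |ζ''(s)| ≤ M/(1+|s|)^{1+γ}. Consider the system ∂_u ℓ̄^μ = 0 (μ = 0,1) and ∂_ū ℓ^μ + ζ'(ū)ζ''(ū) H₀ [ (ℓ⁰-ℓ¹)(-1) + ℓ̄^μ(-2 + ℓ⁰ - ℓ¹) ] = 0 (where in the first bracket (-1) stands for the components of the background vector L̄̊ = (-1,-1)), with data on the line {u+ū = 0} bounded by ε. Then there exist ε₀ > 0 and C ≥ 1 depending only on H₀, M, γ such that for ε < ε₀ a unique global C⁰ (continuous, C¹ along characteristics) solution exists with sup |ℓ^μ|, sup |ℓ̄^μ| ≤ Cε. -/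
open MeasureTheory intervalIntegral Real

lemma cont_ftc {f : ℝ → ℝ} (hf : Continuous f) (c x : ℝ) :
    HasDerivAt (fun y => ∫ t in c..y, f t) (f x) x :=
  intervalIntegral.integral_hasDerivAt_right (hf.intervalIntegrable c x)
    (hf.aestronglyMeasurable.stronglyMeasurableAtFilter) hf.continuousAt

lemma cont_primitive {f : ℝ → ℝ} (hf : Continuous f) (c : ℝ) :
    Continuous fun x => ∫ t in c..x, f t :=
  intervalIntegral.continuous_primitive (fun a b => hf.intervalIntegrable a b) c

lemma const_of_deriv0 {f : ℝ → ℝ} (hf : ∀ x, HasDerivAt f 0 x) (x y : ℝ) : f x = f y :=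
  is_const_of_deriv_eq_zero (fun z => (hf z).differentiableAt) (fun z => (hf z).deriv) x y

lemma abs_intervalIntegral_le_s19 {f h : ℝ → ℝ} (hf : Continuous f) (hh : Integrable h)
    (hb : ∀ w, |f w| ≤ h w) (c x : ℝ) : |∫ t in c..x, f t| ≤ ∫ t, h t := by
  have h1 : |∫ t in c..x, f t| ≤ ∫ t in Set.uIoc c x, |f t| := by
    simpa [Real.norm_eq_abs] using
      intervalIntegral.norm_integral_le_integral_norm_uIoc (f := f) (a := c) (b := x) (μ := volume)
  have hfi : IntegrableOn (fun t => |f t|) (Set.uIoc c x) :=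
    intervalIntegrable_iff.mp (hf.abs.intervalIntegrable c x)
  have h2 : ∫ t in Set.uIoc c x, |f t| ≤ ∫ t in Set.uIoc c x, h t :=
    setIntegral_mono hfi (hh.integrableOn) hb
  have h3 : ∫ t in Set.uIoc c x, h t ≤ ∫ t, h t :=
    setIntegral_le_integral hh (Filter.Eventually.of_forall fun t => (abs_nonneg (f t)).trans (hb t))
  linarith


open MeasureTheory intervalIntegral Real

noncomputable section MGWP

variable (H₀ : ℝ) (ζ : ℝ → ℝ) (ℓd ℓbd : Fin 2 → ℝ → ℝ)

def aF (w : ℝ) : ℝ := deriv ζ w * deriv (deriv ζ) w * H₀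
def bF (μ : Fin 2) (w : ℝ) : ℝ := ℓbd μ (-w)
def qF (w : ℝ) : ℝ := aF H₀ ζ w * (bF ℓbd 1 w - bF ℓbd 0 w)
def JF (x : ℝ) : ℝ := ∫ t in (0:ℝ)..x, qF H₀ ζ ℓbd t
def dF (u w : ℝ) : ℝ :=
  2 + (ℓd 0 u - ℓd 1 u - 2) * Real.exp (JF H₀ ζ ℓbd w - JF H₀ ζ ℓbd (-u))
def GF (μ : Fin 2) (w : ℝ) : ℝ :=
  aF H₀ ζ w * (1 - bF ℓbd μ w) * Real.exp (JF H₀ ζ ℓbd w)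
def PGF (μ : Fin 2) (x : ℝ) : ℝ := ∫ t in (0:ℝ)..x, GF H₀ ζ ℓbd μ t
def PAF (x : ℝ) : ℝ := ∫ t in (0:ℝ)..x, 2 * aF H₀ ζ t
def LF (μ : Fin 2) (u ub : ℝ) : ℝ :=
  ℓd μ u + (PAF H₀ ζ ub - PAF H₀ ζ (-u)) +
    (ℓd 0 u - ℓd 1 u - 2) * Real.exp (-(JF H₀ ζ ℓbd (-u))) *
      (PGF H₀ ζ ℓbd μ ub - PGF H₀ ζ ℓbd μ (-u))

variable {H₀ ζ ℓd ℓbd}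
variable (hζ : ContDiff ℝ 2 ζ) (hbc : ∀ μ, Continuous (ℓbd μ)) (hdc : ∀ μ, Continuous (ℓd μ))

section basic
include hζ

lemma aF_cont : Continuous (aF H₀ ζ) := by
  have h1 : ContDiff ℝ 1 (deriv ζ) := by
    have := (contDiff_succ_iff_deriv (n := 1)).mp (by exact_mod_cast hζ)
    exact this.2.2
  exact ((h1.continuous).mul (h1.continuous_deriv le_rfl)).mul continuous_const

include hbc

lemma qF_cont : Continuous (qF H₀ ζ ℓbd) :=
  (aF_cont hζ).mul (((hbc 1).comp continuous_neg).sub ((hbc 0).comp continuous_neg))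

lemma JF_cont : Continuous (JF H₀ ζ ℓbd) := cont_primitive (qF_cont hζ hbc) 0

lemma JF_deriv (x : ℝ) : HasDerivAt (JF H₀ ζ ℓbd) (qF H₀ ζ ℓbd x) x :=
  cont_ftc (qF_cont hζ hbc) 0 x

lemma GF_cont (μ : Fin 2) : Continuous (GF H₀ ζ ℓbd μ) :=
  ((aF_cont hζ).mul (continuous_const.sub ((hbc μ).comp continuous_neg))).mul
    (Real.continuous_exp.comp (JF_cont hζ hbc))

lemma dF_cont_w (u : ℝ) : Continuous (fun w => dF H₀ ζ ℓd ℓbd u w) :=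
  continuous_const.add (continuous_const.mul
    (Real.continuous_exp.comp ((JF_cont hζ hbc).sub continuous_const)))

lemma dF_deriv (u w : ℝ) :
    HasDerivAt (fun w => dF H₀ ζ ℓd ℓbd u w)
      (qF H₀ ζ ℓbd w * (dF H₀ ζ ℓd ℓbd u w - 2)) w := by
  have h1 : HasDerivAt (fun w => JF H₀ ζ ℓbd w - JF H₀ ζ ℓbd (-u)) (qF H₀ ζ ℓbd w) w :=
    (JF_deriv hζ hbc w).sub_const _
  have h2 := (h1.exp).const_mul (ℓd 0 u - ℓd 1 u - 2)
  have h3 := h2.const_add 2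
  refine h3.congr_deriv (Eq.symm ?_)
  simp only [dF]
  ring

end basic
section lf
include hζ hbc

omit hζ hbc in
lemma key_exp (u w : ℝ) :
    (ℓd 0 u - ℓd 1 u - 2) * Real.exp (-(JF H₀ ζ ℓbd (-u))) * Real.exp (JF H₀ ζ ℓbd w)
      = dF H₀ ζ ℓd ℓbd u w - 2 := by
  simp only [dF, mul_assoc, ← Real.exp_add]
  ring_nf

lemma LF_deriv (μ : Fin 2) (u ub : ℝ) :
    HasDerivAt (fun w => LF H₀ ζ ℓd ℓbd μ u w)
      (aF H₀ ζ ub * dF H₀ ζ ℓd ℓbd u ub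
        - aF H₀ ζ ub * bF ℓbd μ ub * (dF H₀ ζ ℓd ℓbd u ub - 2)) ub := by
  have hPA : HasDerivAt (PAF H₀ ζ) (2 * aF H₀ ζ ub) ub :=
    cont_ftc (continuous_const.mul (aF_cont hζ)) 0 ub
  have hPG : HasDerivAt (PGF H₀ ζ ℓbd μ) (GF H₀ ζ ℓbd μ ub) ub :=
    cont_ftc (GF_cont hζ hbc μ) 0 ub
  have h := ((hPA.sub_const (PAF H₀ ζ (-u))).const_add (ℓd μ u)).add
    (((hPG.sub_const (PGF H₀ ζ ℓbd μ (-u))).const_mul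
      ((ℓd 0 u - ℓd 1 u - 2) * Real.exp (-(JF H₀ ζ ℓbd (-u))))))
  have h2 : HasDerivAt (fun w => LF H₀ ζ ℓd ℓbd μ u w)
      (2 * aF H₀ ζ ub + (ℓd 0 u - ℓd 1 u - 2) * Real.exp (-(JF H₀ ζ ℓbd (-u))) *
        GF H₀ ζ ℓbd μ ub) ub := by
    exact h
  convert h2 using 1
  have hk := key_exp (H₀ := H₀) (ζ := ζ) (ℓd := ℓd) (ℓbd := ℓbd) u ub
  simp only [GF]
  linear_combination (-(aF H₀ ζ ub * (1 - bF ℓbd μ ub))) * hk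

lemma PGF_sub (x : ℝ) :
    PGF H₀ ζ ℓbd 0 x - PGF H₀ ζ ℓbd 1 x = Real.exp (JF H₀ ζ ℓbd x) - 1 := by
  have h1 : PGF H₀ ζ ℓbd 0 x - PGF H₀ ζ ℓbd 1 x
      = ∫ t in (0:ℝ)..x, (GF H₀ ζ ℓbd 0 t - GF H₀ ζ ℓbd 1 t) := by
    rw [intervalIntegral.integral_sub ((GF_cont hζ hbc 0).intervalIntegrable 0 x)
      ((GF_cont hζ hbc 1).intervalIntegrable 0 x)]
    rfl
  have h2 : ∀ t ∈ Set.uIcc (0:ℝ) x,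
      HasDerivAt (fun s => Real.exp (JF H₀ ζ ℓbd s))
        (GF H₀ ζ ℓbd 0 t - GF H₀ ζ ℓbd 1 t) t := by
    intro t _
    have hder : HasDerivAt (fun s => Real.exp (JF H₀ ζ ℓbd s))
        (Real.exp (JF H₀ ζ ℓbd t) * qF H₀ ζ ℓbd t) t := (JF_deriv hζ hbc t).exp
    convert hder using 1
    simp only [GF, qF]
    ring
  have h3 : ∫ t in (0:ℝ)..x, (GF H₀ ζ ℓbd 0 t - GF H₀ ζ ℓbd 1 t)
      = Real.exp (JF H₀ ζ ℓbd x) - Real.exp (JF H₀ ζ ℓbd 0) :=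
    intervalIntegral.integral_eq_sub_of_hasDerivAt h2
      (((GF_cont hζ hbc 0).sub (GF_cont hζ hbc 1)).intervalIntegrable 0 x)
  have h4 : JF H₀ ζ ℓbd 0 = 0 := intervalIntegral.integral_same
  rw [h1, h3, h4, Real.exp_zero]

lemma LF_diff (u ub : ℝ) :
    LF H₀ ζ ℓd ℓbd 0 u ub - LF H₀ ζ ℓd ℓbd 1 u ub = dF H₀ ζ ℓd ℓbd u ub := by
  simp only [LF, dF]
  rw [show ∀ A B C D E : ℝ, (A + B + C) - (D + B + E) = (A - D) + (C - E) from by intros; ring]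
  have e0 := PGF_sub (H₀ := H₀) (ζ := ζ) (ℓbd := ℓbd) hζ hbc ub
  have e1 := PGF_sub (H₀ := H₀) (ζ := ζ) (ℓbd := ℓbd) hζ hbc (-u)
  have hexp : Real.exp (-(JF H₀ ζ ℓbd (-u))) * Real.exp (JF H₀ ζ ℓbd ub)
      = Real.exp (JF H₀ ζ ℓbd ub - JF H₀ ζ ℓbd (-u)) := by
    rw [← Real.exp_add]; ring_nf
  have hexp2 : Real.exp (-(JF H₀ ζ ℓbd (-u))) * Real.exp (JF H₀ ζ ℓbd (-u)) = 1 := by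
    rw [← Real.exp_add]; simp
  linear_combination (ℓd 0 u - ℓd 1 u - 2) * Real.exp (-(JF H₀ ζ ℓbd (-u))) * e0
    - (ℓd 0 u - ℓd 1 u - 2) * Real.exp (-(JF H₀ ζ ℓbd (-u))) * e1
    + (ℓd 0 u - ℓd 1 u - 2) * hexp - (ℓd 0 u - ℓd 1 u - 2) * hexp2

omit hζ hbc in
lemma LF_data (μ : Fin 2) (s : ℝ) : LF H₀ ζ ℓd ℓbd μ s (-s) = ℓd μ s := by
  simp [LF]

lemma LF_int (μ : Fin 2) (u ub : ℝ) :
    LF H₀ ζ ℓd ℓbd μ u ub = ℓd μ u + ∫ w in (-u)..ub,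
      (aF H₀ ζ w * dF H₀ ζ ℓd ℓbd u w
        - aF H₀ ζ w * bF ℓbd μ w * (dF H₀ ζ ℓd ℓbd u w - 2)) := by
  have hPA : PAF H₀ ζ ub - PAF H₀ ζ (-u) = ∫ w in (-u)..ub, 2 * aF H₀ ζ w :=
    intervalIntegral.integral_interval_sub_left
      ((continuous_const.mul (aF_cont hζ)).intervalIntegrable 0 ub)
      ((continuous_const.mul (aF_cont hζ)).intervalIntegrable 0 (-u))
  have hPG : PGF H₀ ζ ℓbd μ ub - PGF H₀ ζ ℓbd μ (-u) = ∫ w in (-u)..ub, GF H₀ ζ ℓbd μ w :=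
    intervalIntegral.integral_interval_sub_left
      ((GF_cont hζ hbc μ).intervalIntegrable 0 ub)
      ((GF_cont hζ hbc μ).intervalIntegrable 0 (-u))
  simp only [LF]
  rw [hPA, hPG, ← intervalIntegral.integral_const_mul, add_assoc,
    ← intervalIntegral.integral_add (f := fun w => 2 * aF H₀ ζ w)
      (g := fun x => (ℓd 0 u - ℓd 1 u - 2) * Real.exp (-(JF H₀ ζ ℓbd (-u))) * GF H₀ ζ ℓbd μ x)
      ((continuous_const.mul (aF_cont hζ)).intervalIntegrable (-u) ub)
      ((continuous_const.mul (GF_cont hζ hbc μ)).intervalIntegrable (-u) ub)]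
  congr 1
  apply intervalIntegral.integral_congr
  intro w _
  have hk := key_exp (H₀ := H₀) (ζ := ζ) (ℓd := ℓd) (ℓbd := ℓbd) u w
  simp only [GF]
  linear_combination (aF H₀ ζ w * (1 - bF ℓbd μ w)) * hk

include hdc in
lemma LF_cont (μ : Fin 2) : Continuous (Function.uncurry (LF H₀ ζ ℓd ℓbd μ)) := by
  have hPA : Continuous (PAF H₀ ζ) := cont_primitive (continuous_const.mul (aF_cont hζ)) 0
  have hPG : Continuous (PGF H₀ ζ ℓbd μ) := cont_primitive (GF_cont hζ hbc μ) 0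
  have hJ : Continuous (JF H₀ ζ ℓbd) := JF_cont hζ hbc
  apply Continuous.add
  apply Continuous.add
  · exact (hdc μ).comp continuous_fst
  · exact (hPA.comp continuous_snd).sub (hPA.comp (continuous_neg.comp continuous_fst))
  · exact ((((hdc 0).comp continuous_fst).sub ((hdc 1).comp continuous_fst)).sub
        continuous_const).mul
      (Real.continuous_exp.comp ((hJ.comp (continuous_neg.comp continuous_fst)).neg)) |>.mul
      ((hPG.comp continuous_snd).sub (hPG.comp (continuous_neg.comp continuous_fst)))

end lf
end MGWP

/-- Global well-posedness for the model geodesic/null-frame system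
`∂_u ℓ̄^μ = 0`, `∂_ū ℓ^μ + ζ'(ū)ζ''(ū) H₀ [(ℓ⁰-ℓ¹)(-1) + ℓ̄^μ(-2+ℓ⁰-ℓ¹)] = 0`
with data of size `ε` on `{u + ū = 0}`: for `ε` small there is a unique global
continuous solution (C¹ along the characteristics), uniformly bounded by `Cε`,
with `ε₀, C` depending only on `H₀, M, γ`. -/
theorem model_geodesic_system_gwp (H₀ M γ : ℝ) (hM : 0 < M) (hγ : 0 < γ) :
    ∃ ε₀ C : ℝ, 0 < ε₀ ∧ 1 ≤ C ∧
      ∀ ζ : ℝ → ℝ, ContDiff ℝ 2 ζ →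
        (∀ s, |deriv ζ s| ≤ M / (1 + |s|) ^ (1 + γ) ∧
          |deriv (deriv ζ) s| ≤ M / (1 + |s|) ^ (1 + γ)) →
        ∀ ε : ℝ, 0 < ε → ε < ε₀ →
          ∀ ℓd ℓbd : Fin 2 → ℝ → ℝ,
            (∀ μ, Continuous (ℓd μ) ∧ Continuous (ℓbd μ)) →
            (∀ μ s, |ℓd μ s| ≤ ε ∧ |ℓbd μ s| ≤ ε) →
            ∃! p : (Fin 2 → ℝ → ℝ → ℝ) × (Fin 2 → ℝ → ℝ → ℝ),
              (∀ μ, Continuous (Function.uncurry (p.1 μ)) ∧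
                Continuous (Function.uncurry (p.2 μ))) ∧
              (∀ μ u ub, HasDerivAt (fun s => p.2 μ s ub) 0 u) ∧
              (∀ μ u ub, HasDerivAt (fun w => p.1 μ u w)
                (-(deriv ζ ub * deriv (deriv ζ) ub * H₀ *
                  ((p.1 0 u ub - p.1 1 u ub) * (-1) +
                    p.2 μ u ub * (-2 + p.1 0 u ub - p.1 1 u ub)))) ub) ∧
              (∀ μ s, p.1 μ s (-s) = ℓd μ s ∧ p.2 μ s (-s) = ℓbd μ s) ∧
              (∀ μ u ub, |p.1 μ u ub| ≤ C * ε ∧ |p.2 μ u ub| ≤ C * ε) := by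
  classical
  set g : ℝ → ℝ := fun w => |H₀| * M ^ 2 * (1 + |w|) ^ (-(2 + 2 * γ)) with hg_def
  have hg_int : MeasureTheory.Integrable g := by
    have h := integrable_one_add_norm (E := ℝ) (μ := MeasureTheory.volume)
      (r := 2 + 2 * γ) (by rw [Module.finrank_self]; push_cast; linarith)
    simpa [hg_def, Real.norm_eq_abs, mul_comm] using h.const_mul (|H₀| * M ^ 2)
  have hg_nn : ∀ w, 0 ≤ g w := by
    intro w
    have : (0:ℝ) < 1 + |w| := by positivity
    rw [hg_def]
    positivity
  set A : ℝ := ∫ w, g w with hA_def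
  have hA0 : 0 ≤ A := MeasureTheory.integral_nonneg hg_nn
  refine ⟨1 / (2 * A + 2), 1 + (8 * A + 18) * A, by positivity, by nlinarith, ?_⟩
  intro ζ hζ hζb ε hε hεlt ℓd ℓbd hcont hdata
  have hdc : ∀ μ, Continuous (ℓd μ) := fun μ => (hcont μ).1
  have hbc : ∀ μ, Continuous (ℓbd μ) := fun μ => (hcont μ).2
  have hA2 : (0:ℝ) < 2 * A + 2 := by linarith
  have hε1 : ε ≤ 1 := by
    have : 1 / (2 * A + 2) ≤ 1 / 2 := by
      apply one_div_le_one_div_of_le <;> linarith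
    linarith
  have hεA : 2 * ε * A ≤ 1 := by
    have h1 : ε * (2 * A + 2) < 1 := (lt_div_iff₀ hA2).mp hεlt
    nlinarith
  -- pointwise bounds
  have ha_le : ∀ w, |aF H₀ ζ w| ≤ g w := by
    intro w
    have hX : (0:ℝ) < 1 + |w| := by positivity
    have h1 := (hζb w).1
    have h2 := (hζb w).2
    have hp : (0:ℝ) < (1 + |w|) ^ (1 + γ) := Real.rpow_pos_of_pos hX _
    have key : g w = M / (1 + |w|) ^ (1 + γ) * (M / (1 + |w|) ^ (1 + γ)) * |H₀| := by
      rw [hg_def]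
      simp only
      rw [Real.rpow_neg hX.le, show (2 + 2*γ : ℝ) = (1+γ) + (1+γ) by ring, Real.rpow_add hX]
      field_simp
    calc |aF H₀ ζ w| = |deriv ζ w| * |deriv (deriv ζ) w| * |H₀| := by
          simp [aF, abs_mul]
      _ ≤ M / (1 + |w|) ^ (1 + γ) * (M / (1 + |w|) ^ (1 + γ)) * |H₀| := by
          apply mul_le_mul_of_nonneg_right _ (abs_nonneg _)
          exact mul_le_mul h1 h2 (abs_nonneg _) (by positivity)
      _ = g w := key.symm
  have hb_le : ∀ (μ : Fin 2) w, |bF ℓbd μ w| ≤ ε := fun μ w => (hdata μ (-w)).2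
  have hq_le : ∀ w, |qF H₀ ζ ℓbd w| ≤ 2 * ε * g w := by
    intro w
    have hbb : |bF ℓbd 1 w - bF ℓbd 0 w| ≤ 2 * ε := by
      have := (abs_sub (bF ℓbd 1 w) (bF ℓbd 0 w))
      have h1 := hb_le 1 w; have h0 := hb_le 0 w
      linarith
    calc |qF H₀ ζ ℓbd w| = |aF H₀ ζ w| * |bF ℓbd 1 w - bF ℓbd 0 w| := by
          simp [qF, abs_mul]
      _ ≤ g w * (2 * ε) := mul_le_mul (ha_le w) hbb (abs_nonneg _) (hg_nn w)
      _ = 2 * ε * g w := by ring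
  have hJ_bound : ∀ c x, |JF H₀ ζ ℓbd x - JF H₀ ζ ℓbd c| ≤ 2 * ε * A := by
    intro c x
    have hqc := qF_cont (H₀ := H₀) hζ hbc
    have heq : JF H₀ ζ ℓbd x - JF H₀ ζ ℓbd c = ∫ t in c..x, qF H₀ ζ ℓbd t :=
      intervalIntegral.integral_interval_sub_left (hqc.intervalIntegrable 0 x)
        (hqc.intervalIntegrable 0 c)
    rw [heq]
    have h := abs_intervalIntegral_le_s19 hqc (hg_int.const_mul (2 * ε)) hq_le c x
    rwa [MeasureTheory.integral_const_mul, ← hA_def] at h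
  have hd_bound : ∀ u w, |dF H₀ ζ ℓd ℓbd u w| ≤ ε * (8 * A + 6) := by
    intro u w
    set I := JF H₀ ζ ℓbd w - JF H₀ ζ ℓbd (-u) with hI_def
    have hI : |I| ≤ 2 * ε * A := hJ_bound (-u) w
    have hI1 : |I| ≤ 1 := hI.trans hεA
    have hexp1 : |Real.exp I - 1| ≤ 2 * |I| := Real.abs_exp_sub_one_le hI1
    have h3 : Real.exp I ≤ 3 := by
      have h := Real.exp_one_lt_d9
      have h2 : Real.exp I ≤ Real.exp 1 := Real.exp_le_exp.mpr ((le_abs_self I).trans hI1)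
      nlinarith
    have hδ : |ℓd 0 u - ℓd 1 u| ≤ 2 * ε := by
      have := abs_sub (ℓd 0 u) (ℓd 1 u)
      have h1 := (hdata 0 u).1; have h2 := (hdata 1 u).1
      linarith
    have hrw : dF H₀ ζ ℓd ℓbd u w
        = (ℓd 0 u - ℓd 1 u) * Real.exp I - 2 * (Real.exp I - 1) := by
      simp only [dF, hI_def]; ring
    have habs1 : |(ℓd 0 u - ℓd 1 u) * Real.exp I| ≤ 2 * ε * 3 := by
      rw [abs_mul, abs_of_pos (Real.exp_pos _)]
      exact mul_le_mul hδ h3 (Real.exp_pos _).le (by positivity)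
    have habs2 : |2 * (Real.exp I - 1)| ≤ 2 * (2 * (2 * ε * A)) := by
      rw [abs_mul]
      have : |(2:ℝ)| = 2 := by norm_num
      rw [this]
      nlinarith
    calc |dF H₀ ζ ℓd ℓbd u w|
        ≤ |(ℓd 0 u - ℓd 1 u) * Real.exp I| + |2 * (Real.exp I - 1)| := by
          rw [hrw]; exact abs_sub _ _
      _ ≤ 2 * ε * 3 + 2 * (2 * (2 * ε * A)) := add_le_add habs1 habs2
      _ = ε * (8 * A + 6) := by ring
  have hd2_bound : ∀ u w, |dF H₀ ζ ℓd ℓbd u w - 2| ≤ 12 := by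
    intro u w
    set I := JF H₀ ζ ℓbd w - JF H₀ ζ ℓbd (-u) with hI_def
    have hI1 : |I| ≤ 1 := (hJ_bound (-u) w).trans hεA
    have h3 : Real.exp I ≤ 3 := by
      have h := Real.exp_one_lt_d9
      have h2 : Real.exp I ≤ Real.exp 1 := Real.exp_le_exp.mpr ((le_abs_self I).trans hI1)
      nlinarith
    have hδ : |ℓd 0 u - ℓd 1 u - 2| ≤ 4 := by
      have := abs_sub (ℓd 0 u - ℓd 1 u) 2
      have h2 := abs_sub (ℓd 0 u) (ℓd 1 u)
      have ha := (hdata 0 u).1; have hb := (hdata 1 u).1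
      have : |(2:ℝ)| = 2 := by norm_num
      calc |ℓd 0 u - ℓd 1 u - 2| ≤ |ℓd 0 u - ℓd 1 u| + |(2:ℝ)| := abs_sub _ _
        _ ≤ (|ℓd 0 u| + |ℓd 1 u|) + 2 := by rw [this]; linarith [abs_sub (ℓd 0 u) (ℓd 1 u)]
        _ ≤ 4 := by linarith
    have hrw : dF H₀ ζ ℓd ℓbd u w - 2 = (ℓd 0 u - ℓd 1 u - 2) * Real.exp I := by
      simp only [dF, hI_def]; ring
    rw [hrw, abs_mul, abs_of_pos (Real.exp_pos _)]
    nlinarith [Real.exp_pos I, abs_nonneg (ℓd 0 u - ℓd 1 u - 2)]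
  have hFi_le : ∀ (μ : Fin 2) u w,
      |aF H₀ ζ w * dF H₀ ζ ℓd ℓbd u w
        - aF H₀ ζ w * bF ℓbd μ w * (dF H₀ ζ ℓd ℓbd u w - 2)| ≤ ε * (8 * A + 18) * g w := by
    intro μ u w
    have h1 : |aF H₀ ζ w| * |dF H₀ ζ ℓd ℓbd u w| ≤ g w * (ε * (8 * A + 6)) :=
      mul_le_mul (ha_le w) (hd_bound u w) (abs_nonneg _) (hg_nn w)
    have h1' : |aF H₀ ζ w| * |bF ℓbd μ w| ≤ g w * ε :=
      mul_le_mul (ha_le w) (hb_le μ w) (abs_nonneg _) (hg_nn w)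
    have h2 : |aF H₀ ζ w| * |bF ℓbd μ w| * |dF H₀ ζ ℓd ℓbd u w - 2| ≤ g w * ε * 12 :=
      mul_le_mul h1' (hd2_bound u w) (abs_nonneg _)
        (mul_nonneg (hg_nn w) hε.le)
    have heq : ε * (8 * A + 18) * g w = g w * (ε * (8 * A + 6)) + g w * ε * 12 := by ring
    calc |aF H₀ ζ w * dF H₀ ζ ℓd ℓbd u w
          - aF H₀ ζ w * bF ℓbd μ w * (dF H₀ ζ ℓd ℓbd u w - 2)|
        ≤ |aF H₀ ζ w * dF H₀ ζ ℓd ℓbd u w|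
          + |aF H₀ ζ w * bF ℓbd μ w * (dF H₀ ζ ℓd ℓbd u w - 2)| := abs_sub _ _
      _ ≤ g w * (ε * (8 * A + 6)) + g w * ε * 12 := by
          rw [abs_mul, abs_mul, abs_mul]
          exact add_le_add h1 h2
      _ = ε * (8 * A + 18) * g w := heq.symm
  have hFi_cont : ∀ (μ : Fin 2) u, Continuous (fun w =>
      aF H₀ ζ w * dF H₀ ζ ℓd ℓbd u w
        - aF H₀ ζ w * bF ℓbd μ w * (dF H₀ ζ ℓd ℓbd u w - 2)) := by
    intro μ u
    have hac := aF_cont (H₀ := H₀) hζ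
    have hdcw := dF_cont_w (H₀ := H₀) (ℓd := ℓd) hζ hbc u
    have hbcw : Continuous (bF ℓbd μ) := (hbc μ).comp continuous_neg
    exact (hac.mul hdcw).sub ((hac.mul hbcw).mul (hdcw.sub continuous_const))
  have hL_bound : ∀ (μ : Fin 2) u ub,
      |LF H₀ ζ ℓd ℓbd μ u ub| ≤ (1 + (8 * A + 18) * A) * ε := by
    intro μ u ub
    rw [LF_int (H₀ := H₀) (ℓd := ℓd) (ℓbd := ℓbd) hζ hbc μ u ub]
    have hint := abs_intervalIntegral_le_s19 (hFi_cont μ u)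
      (hg_int.const_mul (ε * (8 * A + 18))) (hFi_le μ u) (-u) ub
    rw [MeasureTheory.integral_const_mul, ← hA_def] at hint
    calc |ℓd μ u + ∫ w in (-u)..ub,
          (aF H₀ ζ w * dF H₀ ζ ℓd ℓbd u w
            - aF H₀ ζ w * bF ℓbd μ w * (dF H₀ ζ ℓd ℓbd u w - 2))|
        ≤ |ℓd μ u| + |∫ w in (-u)..ub,
          (aF H₀ ζ w * dF H₀ ζ ℓd ℓbd u w
            - aF H₀ ζ w * bF ℓbd μ w * (dF H₀ ζ ℓd ℓbd u w - 2))| := abs_add_le _ _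
      _ ≤ ε + ε * (8 * A + 18) * A := add_le_add (hdata μ u).1 hint
      _ = (1 + (8 * A + 18) * A) * ε := by ring
  -- the solution
  refine ⟨(fun μ u ub => LF H₀ ζ ℓd ℓbd μ u ub, fun μ _ ub => ℓbd μ (-ub)), ⟨?_, ?_, ?_, ?_, ?_⟩, ?_⟩
  · intro μ
    refine ⟨LF_cont (H₀ := H₀) (ℓd := ℓd) (ℓbd := ℓbd) hζ hbc hdc μ, ?_⟩
    exact (hbc μ).comp (continuous_neg.comp continuous_snd)
  · intro μ u ub
    show HasDerivAt (fun _ : ℝ => ℓbd μ (-ub)) 0 u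
    exact hasDerivAt_const u (ℓbd μ (-ub))
  · intro μ u ub
    show HasDerivAt (fun w => LF H₀ ζ ℓd ℓbd μ u w)
      (-(deriv ζ ub * deriv (deriv ζ) ub * H₀ *
        ((LF H₀ ζ ℓd ℓbd 0 u ub - LF H₀ ζ ℓd ℓbd 1 u ub) * (-1) +
          ℓbd μ (-ub) * (-2 + LF H₀ ζ ℓd ℓbd 0 u ub - LF H₀ ζ ℓd ℓbd 1 u ub)))) ub
    have h := LF_deriv (H₀ := H₀) (ℓd := ℓd) (ℓbd := ℓbd) hζ hbc μ u ub
    have hdiff := LF_diff (H₀ := H₀) (ℓd := ℓd) (ℓbd := ℓbd) hζ hbc u ub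
    convert h using 1
    simp only [aF, bF]
    linear_combination (deriv ζ ub * deriv (deriv ζ) ub * H₀ * (1 - ℓbd μ (-ub))) * hdiff
  · intro μ s
    refine ⟨LF_data (H₀ := H₀) (ℓd := ℓd) (ℓbd := ℓbd) μ s, ?_⟩
    show ℓbd μ (-(-s)) = ℓbd μ s
    rw [neg_neg]
  · intro μ u ub
    constructor
    · exact hL_bound μ u ub
    · show |ℓbd μ (-ub)| ≤ (1 + (8 * A + 18) * A) * ε
      have h := (hdata μ (-ub)).2
      have h2 : 0 ≤ (8 * A + 18) * A * ε :=
        mul_nonneg (mul_nonneg (by linarith) hA0) hε.le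
      nlinarith
  -- uniqueness
  · rintro ⟨P, Q⟩ ⟨hc', hQ', hP', hdat', hbd'⟩
    dsimp only at hc' hQ' hP' hdat' hbd' ⊢
    have hQeq : ∀ (μ : Fin 2) u ub, Q μ u ub = ℓbd μ (-ub) := by
      intro μ u ub
      have h := const_of_deriv0 (f := fun s => Q μ s ub) (fun x => hQ' μ x ub) u (-ub)
      have h2 := (hdat' μ (-ub)).2
      rw [neg_neg] at h2
      exact h.trans h2
    have hPdiff : ∀ u w, P 0 u w - P 1 u w = dF H₀ ζ ℓd ℓbd u w := by
      intro u w
      have hRd : ∀ x, HasDerivAt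
          (fun y => (P 0 u y - P 1 u y - dF H₀ ζ ℓd ℓbd u y) * Real.exp (-(JF H₀ ζ ℓbd y)))
          0 x := by
        intro x
        have h0 := hP' 0 u x
        have h1 := hP' 1 u x
        rw [hQeq] at h0 h1
        have hd := dF_deriv (H₀ := H₀) (ℓd := ℓd) (ℓbd := ℓbd) hζ hbc u x
        have hsub := (h0.sub h1).sub hd
        have hexp : HasDerivAt (fun y => Real.exp (-(JF H₀ ζ ℓbd y)))
            (Real.exp (-(JF H₀ ζ ℓbd x)) * -(qF H₀ ζ ℓbd x)) x :=
          ((JF_deriv (H₀ := H₀) (ℓbd := ℓbd) hζ hbc x).neg).exp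
        have hmul := hsub.mul hexp
        refine hmul.congr_deriv (Eq.symm ?_)
        simp only [qF, aF, bF, Pi.sub_apply]
        ring
      have hconst := const_of_deriv0 hRd w (-u)
      have hduu : dF H₀ ζ ℓd ℓbd u (-u) = ℓd 0 u - ℓd 1 u := by simp [dF]
      have hz : (P 0 u (-u) - P 1 u (-u) - dF H₀ ζ ℓd ℓbd u (-u))
          * Real.exp (-(JF H₀ ζ ℓbd (-u))) = 0 := by
        rw [(hdat' 0 u).1, (hdat' 1 u).1, hduu]
        ring
      rw [hz] at hconst
      have := mul_eq_zero.mp hconst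
      rcases this with h | h
      · linarith [sub_eq_zero.mp h]
      · exact absurd h (Real.exp_ne_zero _)
    have hPL : ∀ (μ : Fin 2) u w, P μ u w = LF H₀ ζ ℓd ℓbd μ u w := by
      intro μ u w
      have hDd : ∀ x, HasDerivAt (fun y => P μ u y - LF H₀ ζ ℓd ℓbd μ u y) 0 x := by
        intro x
        have h := hP' μ u x
        rw [hQeq] at h
        have hL := LF_deriv (H₀ := H₀) (ℓd := ℓd) (ℓbd := ℓbd) hζ hbc μ u x
        have hsub := h.sub hL
        refine hsub.congr_deriv (Eq.symm ?_)
        have hpd := hPdiff u x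
        simp only [aF, bF] at hL hpd ⊢
        linear_combination (-(deriv ζ x * deriv (deriv ζ) x * H₀ * (1 - ℓbd μ (-x)))) * hpd
      have hconst := const_of_deriv0 hDd w (-u)
      have hz : P μ u (-u) - LF H₀ ζ ℓd ℓbd μ u (-u) = 0 := by
        rw [(hdat' μ u).1, LF_data (H₀ := H₀) (ℓd := ℓd) (ℓbd := ℓbd)]
        ring
      rw [hz] at hconst
      have := sub_eq_zero.mp hconst
      exact this
    refine Prod.ext ?_ ?_
    · funext μ u ub
      exact hPL μ u ub
    · funext μ u ub
      exact hQeq μ u ub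
end
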